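/- On the 3-dimensional complex vector space with basis {x,y,z}, the anticommutative bilinear bracket determined by [x,y] = y, [x,z] = y+z, [y,z] = x, together with the skew-symmetric bilinear form ω determined by ω(x,y) = 0, ω(x,z) = 0, ω(y,z) = 2, satisfies the ω-Jacobi identity; this structure B is a nontrivial (non-Lie) ω-Lie algebra. -/

import Mathlib

/-- The bracket of `B` on `ℂ³`: the bilinear extension of `[x,y] = y`,
`[x,z] = y + z`, `[y,z] = x` on the standard basis `x = e₀, y = e₁, z = e₂`. -/
def brB (u v : Fin 3 → ℂ) : Fin 3 → ℂ :=
  ![u 1 * v 2 - u 2 * v 1, (u 0 * v 1 - u 1 * v 0) + (u 0 * v 2 - u 2 * v 0),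
    u 0 * v 2 - u 2 * v 0]

/-- The form of `B`: the bilinear extension of `ω(x,y) = ω(x,z) = 0`, `ω(y,z) = 2`. -/
def omB (u v : Fin 3 → ℂ) : ℂ := 2 * (u 1 * v 2 - u 2 * v 1)

section

variable (u v : Fin 3 → ℂ)

@[simp] lemma brB_apply_zero : brB u v 0 = u 1 * v 2 - u 2 * v 1 := rfl

@[simp] lemma brB_apply_one :
    brB u v 1 = (u 0 * v 1 - u 1 * v 0) + (u 0 * v 2 - u 2 * v 0) := rfl

@[simp] lemma brB_apply_two : brB u v 2 = u 0 * v 2 - u 2 * v 0 := rfl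

end

lemma brB_add_smul_left (a b : ℂ) (u v w : Fin 3 → ℂ) :
    brB (a • u + b • v) w = a • brB u w + b • brB v w := by
  ext i; fin_cases i <;> simp <;> ring

lemma brB_add_smul_right (a b : ℂ) (u v w : Fin 3 → ℂ) :
    brB w (a • u + b • v) = a • brB w u + b • brB w v := by
  ext i; fin_cases i <;> simp <;> ring

lemma omB_add_smul_left (a b : ℂ) (u v w : Fin 3 → ℂ) :
    omB (a • u + b • v) w = a * omB u w + b * omB v w := by
  simp only [omB, Pi.add_apply, Pi.smul_apply, smul_eq_mul]; ring

lemma omB_add_smul_right (a b : ℂ) (u v w : Fin 3 → ℂ) :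
    omB w (a • u + b • v) = a * omB w u + b * omB w v := by
  simp only [omB, Pi.add_apply, Pi.smul_apply, smul_eq_mul]; ring

lemma brB_anticomm (u v : Fin 3 → ℂ) : brB u v = -brB v u := by
  ext i; fin_cases i <;> simp <;> ring

lemma omB_anticomm (u v : Fin 3 → ℂ) : omB u v = -omB v u := by
  simp only [omB]; ring

lemma brB_omega_jacobi (u v w : Fin 3 → ℂ) :
    brB (brB u v) w + brB (brB v w) u + brB (brB w u) v
      = omB u v • w + omB v w • u + omB w u • v := by
  ext i; fin_cases i <;> simp [omB] <;> ring

lemma omB_e₁_e₂ : omB ![0,1,0] ![0,0,1] = 2 := by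
  simp [omB]

/-- On `ℂ³` with basis `x = e₀, y = e₁, z = e₂`, the anticommutative bilinear bracket
determined by `[x,y] = y`, `[x,z] = y + z`, `[y,z] = x` and the skew-symmetric
bilinear form determined by `ω(x,y) = ω(x,z) = 0`, `ω(y,z) = 2` satisfy the ω-Jacobi
identity, and `ω` is not identically zero: `B` is a nontrivial (non-Lie) ω-Lie algebra. -/
theorem B_is_nontrivial_omega_lie :
    (∀ (a b : ℂ) (u v w : Fin 3 → ℂ),
        brB (a • u + b • v) w = a • brB u w + b • brB v w) ∧
    (∀ (a b : ℂ) (u v w : Fin 3 → ℂ),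
        brB w (a • u + b • v) = a • brB w u + b • brB w v) ∧
    (∀ (a b : ℂ) (u v w : Fin 3 → ℂ),
        omB (a • u + b • v) w = a * omB u w + b * omB v w) ∧
    (∀ (a b : ℂ) (u v w : Fin 3 → ℂ),
        omB w (a • u + b • v) = a * omB w u + b * omB w v) ∧
    brB ![1,0,0] ![0,1,0] = ![0,1,0] ∧
    brB ![1,0,0] ![0,0,1] = ![0,1,0] + ![0,0,1] ∧
    brB ![0,1,0] ![0,0,1] = ![1,0,0] ∧
    omB ![1,0,0] ![0,1,0] = 0 ∧
    omB ![1,0,0] ![0,0,1] = 0 ∧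
    omB ![0,1,0] ![0,0,1] = 2 ∧
    (∀ u v : Fin 3 → ℂ, brB u v = - brB v u) ∧
    (∀ u v : Fin 3 → ℂ, omB u v = - omB v u) ∧
    (∀ u v w : Fin 3 → ℂ,
        brB (brB u v) w + brB (brB v w) u + brB (brB w u) v
          = omB u v • w + omB v w • u + omB w u • v) ∧
    ¬ (∀ u v : Fin 3 → ℂ, omB u v = 0) := by
  refine ⟨brB_add_smul_left, brB_add_smul_right, omB_add_smul_left, omB_add_smul_right,
    ?_, ?_, ?_, ?_, ?_, omB_e₁_e₂, brB_anticomm, omB_anticomm, brB_omega_jacobi,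
    fun h => two_ne_zero (omB_e₁_e₂ ▸ h ![0,1,0] ![0,0,1])⟩
  · ext i; fin_cases i <;> simp
  · ext i; fin_cases i <;> simp
  · ext i; fin_cases i <;> simp
  · simp [omB]
  · simp [omB]
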